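/- arXiv:1808.08342 — 5 statements merged into one kernel-verified Lean document; each statement's English description precedes it below -/
import Mathlib

section
/- Let A and B be positive definite complex n×n matrices, let α, β ∈ [0,1], and let f : (0,∞) → (0,∞) be a continuous operator log-convex function. Then f(A ∇_α B) ≤ f((A ∇_α B) ∇_β A) ♯_α f((A ∇_α B) ∇_β B) ≤ f(A) ♯_α f(B) in the Loewner order. -/
open Matrix ComplexOrder

/-- Real power of a matrix via the continuous functional calculus
(for a positive definite matrix this is the usual functional-calculus power). -/
noncomputable def mpow {n : ℕ} (A : Matrix (Fin n) (Fin n) ℂ) (t : ℝ) :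
    Matrix (Fin n) (Fin n) ℂ :=
  cfc (fun x : ℝ => x ^ t) A

/-- The weighted geometric mean `A ♯ₜ B = A^{1/2} (A^{-1/2} B A^{-1/2})^t A^{1/2}`. -/
noncomputable def gm {n : ℕ} (t : ℝ) (A B : Matrix (Fin n) (Fin n) ℂ) :
    Matrix (Fin n) (Fin n) ℂ :=
  mpow A (1/2) * mpow (mpow A (-(1/2)) * B * mpow A (-(1/2))) t * mpow A (1/2)

/-- The weighted arithmetic mean `A ∇ₜ B = (1-t)A + tB`. -/
noncomputable def am {n : ℕ} (t : ℝ) (A B : Matrix (Fin n) (Fin n) ℂ) :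
    Matrix (Fin n) (Fin n) ℂ :=
  (1 - t) • A + t • B

/-- The weighted harmonic mean `A !ₜ B = ((1-t)A⁻¹ + tB⁻¹)⁻¹`. -/
noncomputable def hm {n : ℕ} (t : ℝ) (A B : Matrix (Fin n) (Fin n) ℂ) :
    Matrix (Fin n) (Fin n) ℂ :=
  ((1 - t) • A⁻¹ + t • B⁻¹)⁻¹

/-- The Loewner order: `X ≤ Y` iff `Y - X` is positive semidefinite. -/
noncomputable def loewnerLE {n : ℕ} (X Y : Matrix (Fin n) (Fin n) ℂ) : Prop :=
  (Y - X).PosSemidef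

/-!
The argument works for any operator log-convex map `F` on a unital C⋆-algebra, with the geometric
mean `a ♯ₜ b = a^{1/2} (a^{-1/2} b a^{-1/2})^t a^{1/2}`. Put `c = a ∇_α b`. The first inequality is
log-convexity at the pair `(c ∇_β a, c ∇_β b)`, whose `α`-mean is `c` again. For the second,
log-convexity and monotonicity of `♯` (Löwner–Heinz) give
`F (c ∇_β x) ≤ F c ♯_β F x ≤ (F a ♯_α F b) ♯_β F x` for `x = a, b`. The right-hand sides lie on the
geodesic `s ↦ F a ♯_s F b`, at `s = (1-β)α` and `s = (1-β)α + β`, and their `α`-mean is the point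
`s = α` of that geodesic. The geodesic identity `(a ♯_s b) ♯_t (a ♯_u b) = a ♯_{(1-t)s+tu} b`
reduces, by congruence invariance `(c a c⋆) ♯ₜ (c b c⋆) = c (a ♯ₜ b) c⋆`, to the case of two
powers `m^s`, `m^u` of one element.
-/

open CFC Set
open scoped NNReal

namespace CFC

section GeomMean

variable {A : Type*} [CStarAlgebra A] [PartialOrder A] [StarOrderedRing A]

noncomputable def geomMean (t : ℝ) (a b : A) : A :=
  a ^ (1 / 2 : ℝ) * (a ^ (-(1 / 2) : ℝ) * b * a ^ (-(1 / 2) : ℝ)) ^ t * a ^ (1 / 2 : ℝ)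

lemma isSelfAdjoint_rpow (a : A) (x : ℝ) : IsSelfAdjoint (a ^ x) :=
  .of_nonneg rpow_nonneg

lemma rpow_half_mul_rpow_half {a : A} (ha : 0 ≤ a) : a ^ (1 / 2 : ℝ) * a ^ (1 / 2 : ℝ) = a := by
  rw [← sqrt_eq_rpow, sqrt_mul_sqrt_self a ha]

lemma rpow_rpow_of_isStrictlyPositive {m : A} (hm : IsStrictlyPositive m) (x y : ℝ) :
    (m ^ x) ^ y = m ^ (x * y) := by
  rcases eq_or_ne x 0 with rfl | hx
  · simp [rpow_zero m hm.nonneg]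
  · exact rpow_rpow m x y hx hm

lemma rpow_unitary_conjugate {u : A} (hu : u ∈ unitary A) {m : A} (hm : IsStrictlyPositive m)
    (t : ℝ) : (u * m * star u) ^ t = u * m ^ t * star u := by
  have hcont : Continuous (Unitary.conjStarAlgAut ℝ≥0 A ⟨u, hu⟩) := by
    change Continuous fun x => u * x * star u
    fun_prop
  simp only [rpow_def]
  exact ((Unitary.conjStarAlgAut ℝ≥0 A ⟨u, hu⟩).toStarAlgHom.map_cfc _ m
    (NNReal.continuousOn_rpow_const (.inl (spectrum.zero_notMem _ hm.isUnit))) hcont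
    hm.nonneg (star_right_conjugate_nonneg hm.nonneg u)).symm

lemma _root_.IsStrictlyPositive.rpow_conjugate {a b : A} (ha : IsStrictlyPositive a)
    (hb : IsStrictlyPositive b) (x : ℝ) : IsStrictlyPositive (a ^ x * b * a ^ x) := by
  have := ((IsStrictlyPositive.rpow a x).isUnit.isStrictlyPositive_star_right_conjugate_iff).2 hb
  rwa [(isSelfAdjoint_rpow a x).star_eq] at this

lemma _root_.IsStrictlyPositive.geomMean {a b : A} (ha : IsStrictlyPositive a)
    (hb : IsStrictlyPositive b) (t : ℝ) : IsStrictlyPositive (geomMean t a b) :=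
  ha.rpow_conjugate (IsStrictlyPositive.rpow _ t (ha.rpow_conjugate hb _)) _

lemma _root_.IsStrictlyPositive.convexComb {a b : A} (ha : IsStrictlyPositive a)
    (hb : IsStrictlyPositive b) {t : ℝ} (ht : t ∈ Icc 0 1) :
    IsStrictlyPositive ((1 - t) • a + t • b) := by
  rcases ht.2.lt_or_eq with ht1 | rfl
  · exact (ha.smul (sub_pos.2 ht1)).add_nonneg (smul_nonneg ht.1 hb.nonneg)
  · simpa using hb

lemma geomMean_mono_right {t : ℝ} (ht : t ∈ Icc 0 1) (a : A) {b b' : A} (h : b ≤ b') :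
    geomMean t a b ≤ geomMean t a b' :=
  (isSelfAdjoint_rpow a _).conjugate_le_conjugate <| rpow_le_rpow ht <|
    (isSelfAdjoint_rpow a _).conjugate_le_conjugate h

lemma rpow_neg_half_mul_mul_rpow_half_mem_unitary {c : A} (hc : IsUnit c) {a : A}
    (ha : IsStrictlyPositive a) :
    (c * a * star c) ^ (-(1 / 2) : ℝ) * c * a ^ (1 / 2 : ℝ) ∈ unitary A := by
  set a' := c * a * star c
  have ha' : IsStrictlyPositive a' := hc.isStrictlyPositive_star_right_conjugate_iff.2 ha
  set v := a' ^ (-(1 / 2) : ℝ) * c * a ^ (1 / 2 : ℝ)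
  have hvv : v * star v = 1 :=
    calc v * star v
        = a' ^ (-(1 / 2) : ℝ) * (c * (a ^ (1 / 2 : ℝ) * a ^ (1 / 2 : ℝ)) * star c) *
          a' ^ (-(1 / 2) : ℝ) := by
          simp only [v, star_mul, (isSelfAdjoint_rpow _ _).star_eq, mul_assoc]
      _ = 1 := by rw [rpow_half_mul_rpow_half ha.nonneg, conjugate_rpow_neg_one_half a' ha']
  obtain ⟨u, hu⟩ : IsUnit v :=
    ((IsStrictlyPositive.rpow a' _ ha').isUnit.mul hc).mul (IsStrictlyPositive.rpow a _ ha).isUnit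
  rw [← hu] at hvv ⊢
  exact Unitary.mem_iff.2 ⟨by rw [← Units.inv_eq_of_mul_eq_one_right hvv, Units.inv_mul], hvv⟩

lemma geomMean_star_right_conjugate {c : A} (hc : IsUnit c) {a b : A}
    (ha : IsStrictlyPositive a) (hb : IsStrictlyPositive b) (t : ℝ) :
    geomMean t (c * a * star c) (c * b * star c) = c * geomMean t a b * star c := by
  have hv := rpow_neg_half_mul_mul_rpow_half_mem_unitary hc ha
  have ha' : IsStrictlyPositive (c * a * star c) :=
    hc.isStrictlyPositive_star_right_conjugate_iff.2 ha
  unfold geomMean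
  set a' := c * a * star c
  set r := a ^ (1 / 2 : ℝ)
  set r' := a ^ (-(1 / 2) : ℝ)
  set q := a' ^ (-(1 / 2) : ℝ)
  -- `c a^{1/2} = a'^{1/2} v` is the polar decomposition of `c a^{1/2}`.
  set v := q * c * r
  have hq : star q = q := (isSelfAdjoint_rpow a' _).star_eq
  have hr : star r = r := (isSelfAdjoint_rpow a _).star_eq
  have hr' : star r' = r' := (isSelfAdjoint_rpow a _).star_eq
  have hqc : q * c = v * r' := by
    simp only [v, r, r', mul_assoc, rpow_mul_rpow_neg (1 / 2 : ℝ) ha, mul_one]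
  have hcq : star c * q = r' * star v := by
    have := congrArg star hqc
    rwa [star_mul, star_mul, hq, hr'] at this
  have hpv : a' ^ (1 / 2 : ℝ) * v = c * r := by
    simp only [v, q, ← mul_assoc, rpow_mul_rpow_neg (1 / 2 : ℝ) ha', one_mul]
  have hvp : star v * a' ^ (1 / 2 : ℝ) = r * star c := by
    have := congrArg star hpv
    rwa [star_mul (a' ^ _) v, star_mul c r, hr, (isSelfAdjoint_rpow a' _).star_eq] at this
  calc a' ^ (1 / 2 : ℝ) * (q * (c * b * star c) * q) ^ t * a' ^ (1 / 2 : ℝ)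
      = a' ^ (1 / 2 : ℝ) * (v * (r' * b * r') * star v) ^ t * a' ^ (1 / 2 : ℝ) := by
        congr 3
        calc q * (c * b * star c) * q = (q * c) * b * (star c * q) := by simp only [mul_assoc]
          _ = _ := by rw [hqc, hcq]; simp only [mul_assoc]
    _ = (a' ^ (1 / 2 : ℝ) * v) * (r' * b * r') ^ t * (star v * a' ^ (1 / 2 : ℝ)) := by
        rw [rpow_unitary_conjugate hv (ha.rpow_conjugate hb _)]; simp only [mul_assoc]; rfl
    _ = c * (r * (r' * b * r') ^ t * r) * star c := by
        rw [hpv, hvp]; simp only [mul_assoc]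

lemma geomMean_rpow_rpow {m : A} (hm : IsStrictlyPositive m) (s u t : ℝ) :
    geomMean t (m ^ s) (m ^ u) = m ^ ((1 - t) * s + t * u) := by
  simp only [geomMean, rpow_rpow_of_isStrictlyPositive hm, ← rpow_add hm.isUnit]
  congr 1
  ring

lemma geomMean_eq_star_right_conjugate (a b : A) (t : ℝ) :
    geomMean t a b = a ^ (1 / 2 : ℝ) * (a ^ (-(1 / 2) : ℝ) * b * a ^ (-(1 / 2) : ℝ)) ^ t *
      star (a ^ (1 / 2 : ℝ)) := by
  rw [geomMean, (isSelfAdjoint_rpow a _).star_eq]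

lemma geomMean_geomMean {a b : A} (ha : IsStrictlyPositive a) (hb : IsStrictlyPositive b)
    (s u t : ℝ) :
    geomMean t (geomMean s a b) (geomMean u a b) = geomMean ((1 - t) * s + t * u) a b := by
  have hm := ha.rpow_conjugate hb (-(1 / 2))
  simp only [geomMean_eq_star_right_conjugate a b]
  rw [geomMean_star_right_conjugate (IsStrictlyPositive.rpow a _ ha).isUnit
    (IsStrictlyPositive.rpow _ s hm) (IsStrictlyPositive.rpow _ u hm), geomMean_rpow_rpow hm]

lemma geomMean_zero {a b : A} (ha : IsStrictlyPositive a) (hb : IsStrictlyPositive b) :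
    geomMean 0 a b = a := by
  rw [geomMean, rpow_zero _ (ha.rpow_conjugate hb _).nonneg, mul_one,
    rpow_half_mul_rpow_half ha.nonneg]

lemma geomMean_one {a b : A} (ha : IsStrictlyPositive a) (hb : IsStrictlyPositive b) :
    geomMean 1 a b = b := by
  rw [geomMean, rpow_one _ (ha.rpow_conjugate hb _).nonneg]
  simp only [← mul_assoc, rpow_mul_rpow_neg _ ha, one_mul]
  simp only [mul_assoc, rpow_neg_mul_rpow _ ha, mul_one]

lemma geomMean_symm {a b : A} (ha : IsStrictlyPositive a) (hb : IsStrictlyPositive b) (t : ℝ) :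
    geomMean (1 - t) b a = geomMean t a b :=
  calc geomMean (1 - t) b a = geomMean (1 - t) (geomMean 1 a b) (geomMean 0 a b) := by
        rw [geomMean_one ha hb, geomMean_zero ha hb]
    _ = geomMean t a b := by
        rw [geomMean_geomMean ha hb]
        congr 1
        ring

lemma geomMean_mono_left {t : ℝ} (ht : t ∈ Icc 0 1) {a a' b : A} (ha : IsStrictlyPositive a)
    (ha' : IsStrictlyPositive a') (hb : IsStrictlyPositive b) (h : a ≤ a') :
    geomMean t a b ≤ geomMean t a' b := by
  rw [← geomMean_symm ha hb, ← geomMean_symm ha' hb]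
  exact geomMean_mono_right ⟨by linarith [ht.2], by linarith [ht.1]⟩ b h

def IsOperatorLogConvex (F : A → A) : Prop :=
  ∀ a b : A, IsStrictlyPositive a → IsStrictlyPositive b → ∀ t ∈ Icc (0 : ℝ) 1,
    F ((1 - t) • a + t • b) ≤ geomMean t (F a) (F b)

namespace IsOperatorLogConvex

variable {F : A → A} {a b c : A} {α β : ℝ}

lemma le_geomMean_convexComb (hF : IsOperatorLogConvex F) (ha : IsStrictlyPositive a)
    (hb : IsStrictlyPositive b) (hα : α ∈ Icc 0 1) (hβ : β ∈ Icc 0 1)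
    (hc : c = (1 - α) • a + α • b) :
    F c ≤ geomMean α (F ((1 - β) • c + β • a)) (F ((1 - β) • c + β • b)) := by
  have hc_pos : IsStrictlyPositive c := hc ▸ ha.convexComb hb hα
  have h := hF _ _ (hc_pos.convexComb ha hβ) (hc_pos.convexComb hb hβ) α hα
  have hmix : (1 - α) • ((1 - β) • c + β • a) + α • ((1 - β) • c + β • b) = c := by
    subst hc
    module
  rwa [hmix] at h

lemma geomMean_convexComb_le (hF : IsOperatorLogConvex F)
    (hF_pos : ∀ x, IsStrictlyPositive x → IsStrictlyPositive (F x)) (ha : IsStrictlyPositive a)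
    (hb : IsStrictlyPositive b) (hα : α ∈ Icc 0 1) (hβ : β ∈ Icc 0 1)
    (hc : c = (1 - α) • a + α • b) :
    geomMean α (F ((1 - β) • c + β • a)) (F ((1 - β) • c + β • b)) ≤ geomMean α (F a) (F b) := by
  have hc_pos : IsStrictlyPositive c := hc ▸ ha.convexComb hb hα
  have hFa := hF_pos a ha
  have hFb := hF_pos b hb
  have hFc_le : F c ≤ geomMean α (F a) (F b) := hc ▸ hF a b ha hb α hα
  have hstep : ∀ x, IsStrictlyPositive x →
      F ((1 - β) • c + β • x) ≤ geomMean β (geomMean α (F a) (F b)) (F x) := fun x hx =>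
    (hF c x hc_pos hx β hβ).trans <|
      geomMean_mono_left hβ (hF_pos c hc_pos) (hFa.geomMean hFb α) (hF_pos x hx) hFc_le
  have hstep_a : geomMean β (geomMean α (F a) (F b)) (F a) =
      geomMean ((1 - β) * α + β * 0) (F a) (F b) := by
    rw [← geomMean_geomMean hFa hFb, geomMean_zero hFa hFb]
  have hstep_b : geomMean β (geomMean α (F a) (F b)) (F b) =
      geomMean ((1 - β) * α + β * 1) (F a) (F b) := by
    rw [← geomMean_geomMean hFa hFb, geomMean_one hFa hFb]
  calc geomMean α (F ((1 - β) • c + β • a)) (F ((1 - β) • c + β • b))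
      ≤ geomMean α (geomMean ((1 - β) * α + β * 0) (F a) (F b)) (F ((1 - β) • c + β • b)) :=
        geomMean_mono_left hα (hF_pos _ (hc_pos.convexComb ha hβ)) (hFa.geomMean hFb _)
          (hF_pos _ (hc_pos.convexComb hb hβ)) (hstep_a ▸ hstep a ha)
    _ ≤ geomMean α (geomMean ((1 - β) * α + β * 0) (F a) (F b))
          (geomMean ((1 - β) * α + β * 1) (F a) (F b)) :=
        geomMean_mono_right hα _ (hstep_b ▸ hstep b hb)
    _ = geomMean α (F a) (F b) := by
        rw [geomMean_geomMean hFa hFb]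
        congr 1
        ring

end IsOperatorLogConvex

end GeomMean

end CFC

section Matrix

-- These instances make square complex matrices a C⋆-algebra ordered by `loewnerLE`.
open scoped Matrix.Norms.L2Operator MatrixOrder

variable {n : ℕ}

lemma mpow_eq_rpow {X : Matrix (Fin n) (Fin n) ℂ} (hX : X.PosSemidef) (t : ℝ) :
    mpow X t = X ^ t :=
  (rpow_eq_cfc_real hX.nonneg).symm

lemma gm_eq_geomMean {X Y : Matrix (Fin n) (Fin n) ℂ} (hX : X.PosDef) (hY : Y.PosDef) (t : ℝ) :
    gm t X Y = geomMean t X Y := by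
  have hM := hX.isStrictlyPositive.rpow_conjugate hY.isStrictlyPositive (-(1 / 2))
  rw [gm, mpow_eq_rpow hX.posSemidef, mpow_eq_rpow hX.posSemidef,
    mpow_eq_rpow hM.nonneg.posSemidef, geomMean]

lemma isStrictlyPositive_cfc {f : ℝ → ℝ} (hf_pos : ∀ x ∈ Ioi (0 : ℝ), 0 < f x)
    {X : Matrix (Fin n) (Fin n) ℂ} (hX : IsStrictlyPositive X) : IsStrictlyPositive (cfc f X) :=
  (cfc_isStrictlyPositive_iff f X (Matrix.finite_real_spectrum.continuousOn f)).2 fun x hx =>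
    hf_pos x ((StarOrderedRing.isStrictlyPositive_iff_spectrum_pos X).1 hX x hx)

lemma isOperatorLogConvex_cfc {f : ℝ → ℝ} (hf_pos : ∀ x ∈ Ioi (0 : ℝ), 0 < f x)
    (hf : ∀ X Y : Matrix (Fin n) (Fin n) ℂ, X.PosDef → Y.PosDef →
      ∀ t ∈ Icc (0 : ℝ) 1, loewnerLE (cfc f (am t X Y)) (gm t (cfc f X) (cfc f Y))) :
    IsOperatorLogConvex (cfc f : Matrix (Fin n) (Fin n) ℂ → _) := by
  intro X Y hX hY t ht
  have h := hf X Y hX.posDef hY.posDef t ht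
  rwa [gm_eq_geomMean (isStrictlyPositive_cfc hf_pos hX).posDef
    (isStrictlyPositive_cfc hf_pos hY).posDef] at h

end Matrix

theorem stmt0_general {n : ℕ} (A B : Matrix (Fin n) (Fin n) ℂ) (hA : A.PosDef) (hB : B.PosDef)
    (α β : ℝ) (hα : α ∈ Set.Icc (0 : ℝ) 1) (hβ : β ∈ Set.Icc (0 : ℝ) 1)
    (f : ℝ → ℝ)
    (hf_pos : ∀ x ∈ Set.Ioi (0 : ℝ), 0 < f x)
    (hf_logcvx : ∀ X Y : Matrix (Fin n) (Fin n) ℂ, X.PosDef → Y.PosDef →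
      ∀ t ∈ Set.Icc (0 : ℝ) 1, loewnerLE (cfc f (am t X Y)) (gm t (cfc f X) (cfc f Y))) :
    loewnerLE (cfc f (am α A B))
      (gm α (cfc f (am β (am α A B) A)) (cfc f (am β (am α A B) B))) ∧
    loewnerLE (gm α (cfc f (am β (am α A B) A)) (cfc f (am β (am α A B) B)))
      (gm α (cfc f A) (cfc f B)) := by
  open scoped Matrix.Norms.L2Operator MatrixOrder in
  have hF := isOperatorLogConvex_cfc hf_pos hf_logcvx
  have hF_pos : ∀ X : Matrix (Fin n) (Fin n) ℂ, IsStrictlyPositive X →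
      IsStrictlyPositive (cfc f X) := fun _ => isStrictlyPositive_cfc hf_pos
  have hA' := hA.isStrictlyPositive
  have hB' := hB.isStrictlyPositive
  have hC : IsStrictlyPositive (am α A B) := hA'.convexComb hB' hα
  have hCA : IsStrictlyPositive (am β (am α A B) A) := hC.convexComb hA' hβ
  have hCB : IsStrictlyPositive (am β (am α A B) B) := hC.convexComb hB' hβ
  rw [gm_eq_geomMean (hF_pos _ hCA).posDef (hF_pos _ hCB).posDef,
    gm_eq_geomMean (hF_pos _ hA').posDef (hF_pos _ hB').posDef]
  exact ⟨hF.le_geomMean_convexComb hA' hB' hα hβ rfl,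
    hF.geomMean_convexComb_le hF_pos hA' hB' hα hβ rfl⟩

/-- Refined operator log-convexity inequality:
`f(A ∇_α B) ≤ f((A ∇_α B) ∇_β A) ♯_α f((A ∇_α B) ∇_β B) ≤ f(A) ♯_α f(B)`. -/
theorem stmt0 {n : ℕ} (A B : Matrix (Fin n) (Fin n) ℂ) (hA : A.PosDef) (hB : B.PosDef)
    (α β : ℝ) (hα : α ∈ Set.Icc (0 : ℝ) 1) (hβ : β ∈ Set.Icc (0 : ℝ) 1)
    (f : ℝ → ℝ) (hf_cont : ContinuousOn f (Set.Ioi 0))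
    (hf_pos : ∀ x ∈ Set.Ioi (0 : ℝ), 0 < f x)
    (hf_logcvx : ∀ X Y : Matrix (Fin n) (Fin n) ℂ, X.PosDef → Y.PosDef →
      ∀ t ∈ Set.Icc (0 : ℝ) 1, loewnerLE (cfc f (am t X Y)) (gm t (cfc f X) (cfc f Y))) :
    loewnerLE (cfc f (am α A B))
      (gm α (cfc f (am β (am α A B) A)) (cfc f (am β (am α A B) B))) ∧
    loewnerLE (gm α (cfc f (am β (am α A B) A)) (cfc f (am β (am α A B) B)))
      (gm α (cfc f A) (cfc f B)) :=
  stmt0_general A B hA hB α β hα hβ f hf_pos hf_logcvx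
end

section
/- Let A and B be positive definite complex n×n matrices, let α, β ∈ [0,1], and let f : (0,∞) → (0,∞) be a continuous function satisfying f(X ∇_t Y) ≤ f(X) !_t f(Y) for all positive definite X, Y and all t ∈ [0,1]. Then f(A ∇_α B) ≤ f((A ∇_α B) ∇_β A) !_α f((A ∇_α B) ∇_β B) ≤ f(A) !_α f(B) in the Loewner order. -/
open Matrix ComplexOrder

/-! Both inequalities come from the hypothesis on `f` applied to
`X = (A ∇_α B) ∇_β A = A ∇_s B` and `Y = (A ∇_α B) ∇_β B = A ∇_r B`, where `s = (1-β)α` and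
`r = (1-β)α + β`. Weighted arithmetic and harmonic means compose in the same way,
`(C ∇_s D) ∇_a (C ∇_r D) = C ∇_{(1-a)s + ar} D` and likewise for `!`, and `(1-α)s + αr = α`.
Hence `X ∇_α Y = A ∇_α B`, which is the first inequality, and the bounds `f X ≤ f A !_s f B`,
`f Y ≤ f A !_r f B` give the second, because the harmonic mean is monotone (matrix inversion
is operator antitone) and `(f A !_s f B) !_α (f A !_r f B) = f A !_α f B`. -/

open scoped MatrixOrder Matrix.Norms.L2Operator

namespace Matrix

variable {ι : Type*} [Fintype ι] [DecidableEq ι]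

theorem PosDef.inv_le_inv_of_le {X Y : Matrix ι ι ℂ} (hX : X.PosDef) (hXY : X ≤ Y) :
    Y⁻¹ ≤ X⁻¹ := by
  simpa only [nonsing_inv_eq_ringInverse] using
    CStarAlgebra.ringInverse_le_ringInverse hXY hX.isStrictlyPositive

theorem PosDef.of_le {X Y : Matrix ι ι ℂ} (hX : X.PosDef) (hXY : X ≤ Y) : Y.PosDef :=
  (hX.isStrictlyPositive.of_le hXY).posDef

theorem PosDef.cfc_of_pos {A : Matrix ι ι ℂ} (hA : A.PosDef) {f : ℝ → ℝ}
    (hf : ∀ x ∈ Set.Ioi (0 : ℝ), 0 < f x) : (cfc f A).PosDef := by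
  have hspec : ∀ x ∈ spectrum ℝ A, 0 < x :=
    (StarOrderedRing.isStrictlyPositive_iff_spectrum_pos A).mp hA.isStrictlyPositive
  refine IsStrictlyPositive.posDef ?_
  exact (cfc_isStrictlyPositive_iff f A (A.finite_real_spectrum.continuousOn f)
    hA.isHermitian).mpr fun x hx => hf x (hspec x hx)

end Matrix

section Means

variable {n : ℕ} {t : ℝ} {A B X₁ X₂ Y₁ Y₂ : Matrix (Fin n) (Fin n) ℂ}

theorem loewnerLE_iff {X Y : Matrix (Fin n) (Fin n) ℂ} : loewnerLE X Y ↔ X ≤ Y := Iff.rfl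

theorem hm_eq_inv_am : hm t A B = (am t A⁻¹ B⁻¹)⁻¹ := rfl

theorem am_am (a s r : ℝ) : am a (am s A B) (am r A B) = am ((1 - a) * s + a * r) A B := by
  simp only [am]
  module

theorem Matrix.PosDef.am (ht : t ∈ Set.Icc (0 : ℝ) 1) (hA : A.PosDef) (hB : B.PosDef) :
    (am t A B).PosDef := by
  obtain rfl | ht1 := ht.2.eq_or_lt
  · simpa [am] using hB
  exact (hA.smul (sub_pos.mpr ht1)).add_posSemidef (hB.posSemidef.smul ht.1)

theorem Matrix.PosDef.hm (ht : t ∈ Set.Icc (0 : ℝ) 1) (hA : A.PosDef) (hB : B.PosDef) :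
    (hm t A B).PosDef :=
  (hA.inv.am ht hB.inv).inv

theorem am_le_am (ht : t ∈ Set.Icc (0 : ℝ) 1) (h₁ : X₁ ≤ Y₁) (h₂ : X₂ ≤ Y₂) :
    am t X₁ X₂ ≤ am t Y₁ Y₂ := by
  unfold am
  gcongr <;> linarith [ht.1, ht.2]

theorem hm_le_hm (ht : t ∈ Set.Icc (0 : ℝ) 1) (hX₁ : X₁.PosDef) (hX₂ : X₂.PosDef)
    (h₁ : X₁ ≤ Y₁) (h₂ : X₂ ≤ Y₂) : hm t X₁ X₂ ≤ hm t Y₁ Y₂ := by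
  have hY : (am t Y₁⁻¹ Y₂⁻¹).PosDef := ((hX₁.of_le h₁).inv).am ht (hX₂.of_le h₂).inv
  exact hY.inv_le_inv_of_le
    (am_le_am ht (hX₁.inv_le_inv_of_le h₁) (hX₂.inv_le_inv_of_le h₂))

theorem hm_hm (hA : A.PosDef) (hB : B.PosDef) (a : ℝ) {s r : ℝ}
    (hs : s ∈ Set.Icc (0 : ℝ) 1) (hr : r ∈ Set.Icc (0 : ℝ) 1) :
    hm a (hm s A B) (hm r A B) = hm ((1 - a) * s + a * r) A B := by
  have hS := (hA.inv.am hs hB.inv).isUnit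
  have hR := (hA.inv.am hr hB.inv).isUnit
  simp only [hm_eq_inv_am, nonsing_inv_nonsing_inv _ ((isUnit_iff_isUnit_det _).mp hS),
    nonsing_inv_nonsing_inv _ ((isUnit_iff_isUnit_det _).mp hR), am_am]

end Means

theorem stmt4_general {n : ℕ} (A B : Matrix (Fin n) (Fin n) ℂ) (hA : A.PosDef) (hB : B.PosDef)
    (α β : ℝ) (hα : α ∈ Set.Icc (0 : ℝ) 1) (hβ : β ∈ Set.Icc (0 : ℝ) 1)
    (f : ℝ → ℝ)
    (hf_pos : ∀ x ∈ Set.Ioi (0 : ℝ), 0 < f x)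
    (hf : ∀ X Y : Matrix (Fin n) (Fin n) ℂ, X.PosDef → Y.PosDef →
      ∀ t ∈ Set.Icc (0 : ℝ) 1, loewnerLE (cfc f (am t X Y)) (hm t (cfc f X) (cfc f Y))) :
    loewnerLE (cfc f (am α A B))
      (hm α (cfc f (am β (am α A B) A)) (cfc f (am β (am α A B) B))) ∧
    loewnerLE (hm α (cfc f (am β (am α A B) A)) (cfc f (am β (am α A B) B)))
      (hm α (cfc f A) (cfc f B)) := by
  have hs : (1 - β) * α ∈ Set.Icc (0 : ℝ) 1 :=
    ⟨mul_nonneg (sub_nonneg.mpr hβ.2) hα.1, mul_le_one₀ (by linarith [hβ.1]) hα.1 hα.2⟩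
  have hr : (1 - β) * α + β ∈ Set.Icc (0 : ℝ) 1 :=
    ⟨add_nonneg hs.1 hβ.1, by nlinarith [mul_nonneg (sub_nonneg.mpr hβ.2) (sub_nonneg.mpr hα.2)]⟩
  set s := (1 - β) * α
  set r := (1 - β) * α + β
  have hsA : am β (am α A B) A = am s A B := by simp only [am]; module
  have hrB : am β (am α A B) B = am r A B := by simp only [am]; module
  have hweight : (1 - α) * s + α * r = α := by ring
  simp only [loewnerLE_iff] at hf ⊢
  rw [hsA, hrB]
  refine ⟨by simpa only [am_am, hweight] using hf _ _ (hA.am hs hB) (hA.am hr hB) α hα, ?_⟩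
  calc hm α (cfc f (am s A B)) (cfc f (am r A B))
      ≤ hm α (hm s (cfc f A) (cfc f B)) (hm r (cfc f A) (cfc f B)) :=
        hm_le_hm hα ((hA.am hs hB).cfc_of_pos hf_pos) ((hA.am hr hB).cfc_of_pos hf_pos)
          (hf A B hA hB s hs) (hf A B hA hB r hr)
    _ = hm α (cfc f A) (cfc f B) := by
        rw [hm_hm (hA.cfc_of_pos hf_pos) (hB.cfc_of_pos hf_pos) α hs hr, hweight]

/-- Harmonic-mean refinement:
`f(A ∇_α B) ≤ f((A ∇_α B) ∇_β A) !_α f((A ∇_α B) ∇_β B) ≤ f(A) !_α f(B)`. -/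
theorem stmt4 {n : ℕ} (A B : Matrix (Fin n) (Fin n) ℂ) (hA : A.PosDef) (hB : B.PosDef)
    (α β : ℝ) (hα : α ∈ Set.Icc (0 : ℝ) 1) (hβ : β ∈ Set.Icc (0 : ℝ) 1)
    (f : ℝ → ℝ) (hf_cont : ContinuousOn f (Set.Ioi 0))
    (hf_pos : ∀ x ∈ Set.Ioi (0 : ℝ), 0 < f x)
    (hf : ∀ X Y : Matrix (Fin n) (Fin n) ℂ, X.PosDef → Y.PosDef →
      ∀ t ∈ Set.Icc (0 : ℝ) 1, loewnerLE (cfc f (am t X Y)) (hm t (cfc f X) (cfc f Y))) :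
    loewnerLE (cfc f (am α A B))
      (hm α (cfc f (am β (am α A B) A)) (cfc f (am β (am α A B) B))) ∧
    loewnerLE (hm α (cfc f (am β (am α A B) A)) (cfc f (am β (am α A B) B)))
      (hm α (cfc f A) (cfc f B)) :=
  stmt4_general A B hA hB α β hα hβ f hf_pos hf
end

section
/- Let A and B be positive definite complex n×n matrices and let α, β ∈ [0,1]. Then A ♯_α B = ((A ♯_α B) ♯_β A) ♯_α ((A ♯_α B) ♯_β B). -/
/-!
Everything in sight is congruent to a power of the single positive matrix
`D = A^{-1/2} B A^{-1/2}`: writing `M = A^{1/2}` we have `A = M D⁰ M` and `B = M D¹ M`.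
The weighted geometric mean is invariant under congruence, and on powers of one matrix it
interpolates the exponents, `Dᵃ ♯ₜ Dᵇ = D^{(1-t)a + tb}`. Both sides of the identity are
therefore `M D^c M` with `c` an affine expression in `α` and `β`, and the two exponents
agree by a polynomial identity: `(1-α)(1-β)α + α((1-β)α + β) = α`.
-/

open Matrix ComplexOrder

variable {n : ℕ}

lemma Matrix.continuousOn_spectrum_real (A : Matrix (Fin n) (Fin n) ℂ) (f : ℝ → ℝ) :
    ContinuousOn f (spectrum ℝ A) :=
  (finite_real_spectrum (A := A)).continuousOn f

lemma Matrix.PosDef.spectrum_real_pos {A : Matrix (Fin n) (Fin n) ℂ} (hA : A.PosDef) :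
    ∀ x ∈ spectrum ℝ A, 0 < x := by
  intro x hx
  rw [hA.1.spectrum_real_eq_range_eigenvalues] at hx
  obtain ⟨i, rfl⟩ := hx
  exact hA.eigenvalues_pos i

lemma mpow_isHermitian (A : Matrix (Fin n) (Fin n) ℂ) (t : ℝ) : (mpow A t).IsHermitian :=
  cfc_predicate _ _

lemma conjTranspose_mpow (A : Matrix (Fin n) (Fin n) ℂ) (t : ℝ) : (mpow A t)ᴴ = mpow A t :=
  mpow_isHermitian A t

lemma mpow_zero {A : Matrix (Fin n) (Fin n) ℂ} (hA : A.IsHermitian) : mpow A 0 = 1 := by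
  simp only [mpow, Real.rpow_zero]
  exact cfc_const_one ℝ A hA

lemma mpow_one {A : Matrix (Fin n) (Fin n) ℂ} (hA : A.IsHermitian) : mpow A 1 = A := by
  simp only [mpow, Real.rpow_one]
  exact cfc_id' ℝ A hA

lemma mpow_add {A : Matrix (Fin n) (Fin n) ℂ} (hA : A.PosDef) (s t : ℝ) :
    mpow A (s + t) = mpow A s * mpow A t := by
  rw [mpow, mpow, mpow, ← cfc_mul _ _ A (A.continuousOn_spectrum_real _)
    (A.continuousOn_spectrum_real _)]
  exact cfc_congr fun x hx => Real.rpow_add (hA.spectrum_real_pos x hx) s t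

lemma mpow_mul {A : Matrix (Fin n) (Fin n) ℂ} (hA : A.PosDef) (s t : ℝ) :
    mpow A (s * t) = mpow (mpow A s) t := by
  rw [mpow, mpow, mpow]
  refine Eq.trans ?_ (cfc_comp' (fun x : ℝ => x ^ t) (fun x : ℝ => x ^ s) A
    ((finite_real_spectrum.image _).continuousOn _) (A.continuousOn_spectrum_real _) hA.1)
  exact cfc_congr fun x hx => Real.rpow_mul (hA.spectrum_real_pos x hx).le s t

lemma mpow_mul_mpow_neg {A : Matrix (Fin n) (Fin n) ℂ} (hA : A.PosDef) (t : ℝ) :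
    mpow A t * mpow A (-t) = 1 := by
  rw [← mpow_add hA, add_neg_cancel, mpow_zero hA.1]

lemma mpow_unitary_conj (U : unitary (Matrix (Fin n) (Fin n) ℂ))
    {Z : Matrix (Fin n) (Fin n) ℂ} (hZ : Z.IsHermitian) (t : ℝ) :
    mpow ((U : Matrix (Fin n) (Fin n) ℂ) * Z * star (U : Matrix (Fin n) (Fin n) ℂ)) t
      = U * mpow Z t * star (U : Matrix (Fin n) (Fin n) ℂ) :=
  (StarAlgHomClass.map_cfc (Unitary.conjStarAlgAut ℝ _ U) _ Z (Z.continuousOn_spectrum_real _)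
    ((continuous_const.matrix_mul continuous_id).matrix_mul continuous_const) hZ).symm

lemma gm_mul_conjTranspose_self {S Z : Matrix (Fin n) (Fin n) ℂ} (hS : IsUnit S)
    (hZ : Z.IsHermitian) (t : ℝ) :
    gm t (S * Sᴴ) (S * Z * Sᴴ) = S * mpow Z t * Sᴴ := by
  obtain ⟨P, hPdef⟩ : ∃ P, P = S * Sᴴ := ⟨_, rfl⟩
  have hP : P.PosDef := by
    simpa [hPdef, star_eq_conjTranspose] using
      (IsUnit.posDef_star_right_conjugate_iff hS).mpr PosDef.one
  -- `P^{-1/2} S` is the unitary factor of the polar decomposition of `S`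
  obtain ⟨W, hWdef⟩ : ∃ W, W = mpow P (-(1/2)) * S := ⟨_, rfl⟩
  have hW_mul_star : W * star W = 1 := by
    calc W * star W = mpow P (-(1/2)) * mpow P 1 * mpow P (-(1/2)) := by
          rw [mpow_one hP.1, hWdef, star_eq_conjTranspose, conjTranspose_mul, conjTranspose_mpow,
            hPdef]
          noncomm_ring
      _ = 1 := by rw [← mpow_add hP, ← mpow_add hP]; norm_num [mpow_zero hP.1]
  have hW : W ∈ unitary (Matrix (Fin n) (Fin n) ℂ) :=
    Unitary.mem_iff.mpr ⟨mul_eq_one_comm.mp hW_mul_star, hW_mul_star⟩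
  have hPW : mpow P (1/2) * W = S := by
    rw [hWdef, ← mul_assoc, ← mpow_add hP]; norm_num [mpow_zero hP.1]
  have hconj : mpow P (-(1/2)) * (S * Z * Sᴴ) * mpow P (-(1/2)) = W * Z * star W := by
    rw [hWdef, star_eq_conjTranspose, conjTranspose_mul, conjTranspose_mpow]
    noncomm_ring
  rw [← hPdef]
  calc gm t P (S * Z * Sᴴ) = mpow P (1/2) * mpow (W * Z * star W) t * mpow P (1/2) := by
        rw [gm, hconj]
    _ = (mpow P (1/2) * W) * mpow Z t * star (mpow P (1/2) * W) := by
        rw [mpow_unitary_conj ⟨W, hW⟩ hZ, star_mul, star_eq_conjTranspose (mpow P _),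
          conjTranspose_mpow]
        noncomm_ring
    _ = S * mpow Z t * Sᴴ := by rw [hPW, star_eq_conjTranspose]

lemma gm_conj_mpow {M D : Matrix (Fin n) (Fin n) ℂ} (hM : IsUnit M) (hD : D.PosDef)
    (a b t : ℝ) :
    gm t (M * mpow D a * Mᴴ) (M * mpow D b * Mᴴ) = M * mpow D ((1 - t) * a + t * b) * Mᴴ := by
  obtain ⟨S, hSdef⟩ : ∃ S, S = M * mpow D (a / 2) := ⟨_, rfl⟩
  have hS : IsUnit S := hSdef ▸ hM.mul (.of_mul_eq_one _ (mpow_mul_mpow_neg hD _))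
  have hleft : M * mpow D a * Mᴴ = S * Sᴴ := by
    have : mpow D (a / 2) * mpow D (a / 2) = mpow D a := by rw [← mpow_add hD, add_halves]
    rw [hSdef, conjTranspose_mul, conjTranspose_mpow, ← this]
    noncomm_ring
  have hright : M * mpow D b * Mᴴ = S * mpow D (b - a) * Sᴴ := by
    have : mpow D (a / 2) * mpow D (b - a) * mpow D (a / 2) = mpow D b := by
      rw [← mpow_add hD, ← mpow_add hD]; congr 1; ring
    rw [hSdef, conjTranspose_mul, conjTranspose_mpow, ← this]
    noncomm_ring
  have hmean : mpow D (a / 2) * mpow D ((b - a) * t) * mpow D (a / 2)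
      = mpow D ((1 - t) * a + t * b) := by
    rw [← mpow_add hD, ← mpow_add hD]; congr 1; ring
  rw [hleft, hright, gm_mul_conjTranspose_self hS (mpow_isHermitian D _), ← mpow_mul hD, hSdef,
    conjTranspose_mul, conjTranspose_mpow, ← hmean]
  noncomm_ring

lemma exists_simultaneous_congruence_mpow {A B : Matrix (Fin n) (Fin n) ℂ} (hA : A.PosDef)
    (hB : B.PosDef) :
    ∃ M D : Matrix (Fin n) (Fin n) ℂ, IsUnit M ∧ D.PosDef ∧
      A = M * mpow D 0 * Mᴴ ∧ B = M * mpow D 1 * Mᴴ := by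
  have hD : (mpow A (-(1/2)) * B * mpow A (-(1/2))).PosDef := by
    simpa [star_eq_conjTranspose, conjTranspose_mpow] using
      (IsUnit.posDef_star_right_conjugate_iff
        (.of_mul_eq_one _ (mpow_mul_mpow_neg hA (-(1/2))))).mpr hB
  refine ⟨mpow A (1/2), _, .of_mul_eq_one _ (mpow_mul_mpow_neg hA _), hD, ?_, ?_⟩
  · rw [mpow_zero hD.1, mul_one, conjTranspose_mpow, ← mpow_add hA]
    norm_num [mpow_one hA.1]
  · have hinv := mpow_mul_mpow_neg hA (-(1/2))
    rw [neg_neg] at hinv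
    rw [mpow_one hD.1, conjTranspose_mpow]
    calc B = (mpow A (1/2) * mpow A (-(1/2))) * B * (mpow A (-(1/2)) * mpow A (1/2)) := by
          rw [mpow_mul_mpow_neg hA, hinv, one_mul, mul_one]
      _ = _ := by noncomm_ring

theorem stmt7_general {n : ℕ} (A B : Matrix (Fin n) (Fin n) ℂ) (hA : A.PosDef) (hB : B.PosDef)
    (α β : ℝ) :
    gm α A B = gm α (gm β (gm α A B) A) (gm β (gm α A B) B) := by
  obtain ⟨M, D, hM, hD, rfl, rfl⟩ := exists_simultaneous_congruence_mpow hA hB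
  simp only [gm_conj_mpow hM hD]
  congr 3
  ring

/-- The interpolation identity `A ♯_α B = ((A ♯_α B) ♯_β A) ♯_α ((A ♯_α B) ♯_β B)`. -/
theorem stmt7 {n : ℕ} (A B : Matrix (Fin n) (Fin n) ℂ) (hA : A.PosDef) (hB : B.PosDef)
    (α β : ℝ) (hα : α ∈ Set.Icc (0 : ℝ) 1) (hβ : β ∈ Set.Icc (0 : ℝ) 1) :
    gm α A B = gm α (gm β (gm α A B) A) (gm β (gm α A B) B) :=
  stmt7_general A B hA hB α β
end

section
/- Let A and B be bounded linear operators on a complex Hilbert space and let α ∈ [-1,1]. Then ‖A‖ - ‖B‖ ≤ (1/2)·(‖(1+α)·A - 2α·B‖ + ‖(1-α)·A + 2α·B‖ - 2‖B‖) ≤ ‖A - B‖, where ‖·‖ is the operator norm. (Here (1+α)·A - 2α·B = A ∇_{-α} (2B) and (1-α)·A + 2α·B = A ∇_α (2B) with X ∇_t Y = (1-t)·X + t·Y.) -/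
/-- Reverse triangle inequality refinement:
`‖A‖ - ‖B‖ ≤ (1/2)(‖A ∇_{-α}(2B)‖ + ‖A ∇_α(2B)‖ - 2‖B‖) ≤ ‖A - B‖`. -/
theorem stmt11 {H : Type*} [NormedAddCommGroup H] [InnerProductSpace ℂ H]
    (A B : H →L[ℂ] H) (α : ℝ) (hα : α ∈ Set.Icc (-1 : ℝ) 1) :
    ‖A‖ - ‖B‖ ≤
      (1 / 2) * (‖(1 + α) • A - (2 * α) • B‖ + ‖(1 - α) • A + (2 * α) • B‖ - 2 * ‖B‖) ∧
    (1 / 2) * (‖(1 + α) • A - (2 * α) • B‖ + ‖(1 - α) • A + (2 * α) • B‖ - 2 * ‖B‖) ≤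
      ‖A - B‖ := by
  obtain ⟨h1, h2⟩ := hα
  have h1' : (0:ℝ) ≤ 1 + α := by linarith
  have h2' : (0:ℝ) ≤ 1 - α := by linarith
  constructor
  · have hsum : (2:ℝ) • A = ((1 + α) • A - (2 * α) • B) + ((1 - α) • A + (2 * α) • B) := by
      module
    have hle := norm_add_le ((1 + α) • A - (2 * α) • B) ((1 - α) • A + (2 * α) • B)
    have hn : ‖(2:ℝ) • A‖ = 2 * ‖A‖ := by
      rw [norm_smul ((2:ℝ)) A, Real.norm_eq_abs, abs_of_nonneg (by norm_num : (0:ℝ) ≤ 2)]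
    rw [← hsum, hn] at hle
    linarith
  · have e1 : (1 + α) • A - (2 * α) • B = (1 + α) • (A - B) + (1 - α) • B := by module
    have e2 : (1 - α) • A + (2 * α) • B = (1 - α) • (A - B) + (1 + α) • B := by module
    have n1 : ‖(1 + α) • (A - B)‖ = (1 + α) * ‖A - B‖ := by
      rw [norm_smul (1 + α) (A - B), Real.norm_eq_abs, abs_of_nonneg h1']
    have n2 : ‖(1 - α) • B‖ = (1 - α) * ‖B‖ := by
      rw [norm_smul (1 - α) B, Real.norm_eq_abs, abs_of_nonneg h2']
    have n3 : ‖(1 - α) • (A - B)‖ = (1 - α) * ‖A - B‖ := by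
      rw [norm_smul (1 - α) (A - B), Real.norm_eq_abs, abs_of_nonneg h2']
    have n4 : ‖(1 + α) • B‖ = (1 + α) * ‖B‖ := by
      rw [norm_smul (1 + α) B, Real.norm_eq_abs, abs_of_nonneg h1']
    have b1 := norm_add_le ((1 + α) • (A - B)) ((1 - α) • B)
    have b2 := norm_add_le ((1 - α) • (A - B)) ((1 + α) • B)
    rw [n1, n2] at b1
    rw [n3, n4] at b2
    rw [e1, e2]
    linarith
end

section
/- Let A and B be bounded linear operators on a complex Hilbert space and let α ∈ [-1,1]. Then ‖B‖ - ‖A‖ ≤ (1/2)·(‖(1+α)·B - 2α·A‖ + ‖(1-α)·B + 2α·A‖ - 2‖A‖) ≤ ‖A - B‖, where ‖·‖ is the operator norm. (Here (1+α)·B - 2α·A = B ∇_{-α} (2A) and (1-α)·B + 2α·A = B ∇_α (2A) with X ∇_t Y = (1-t)·X + t·Y.) -/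
/-- Reverse triangle inequality refinement:
`‖B‖ - ‖A‖ ≤ (1/2)(‖B ∇_{-α}(2A)‖ + ‖B ∇_α(2A)‖ - 2‖A‖) ≤ ‖A - B‖`. -/
theorem stmt12 {H : Type*} [NormedAddCommGroup H] [InnerProductSpace ℂ H]
    (A B : H →L[ℂ] H) (α : ℝ) (hα : α ∈ Set.Icc (-1 : ℝ) 1) :
    ‖B‖ - ‖A‖ ≤
      (1 / 2) * (‖(1 + α) • B - (2 * α) • A‖ + ‖(1 - α) • B + (2 * α) • A‖ - 2 * ‖A‖) ∧
    (1 / 2) * (‖(1 + α) • B - (2 * α) • A‖ + ‖(1 - α) • B + (2 * α) • A‖ - 2 * ‖A‖) ≤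
      ‖A - B‖ := by
  obtain ⟨h1, h2⟩ := hα
  constructor
  · have key : ‖(2 : ℝ) • B‖ ≤ ‖(1 + α) • B - (2 * α) • A‖ + ‖(1 - α) • B + (2 * α) • A‖ := by
      have : (2 : ℝ) • B = ((1 + α) • B - (2 * α) • A) + ((1 - α) • B + (2 * α) • A) := by
        module
      rw [this]
      exact norm_add_le _ _
    have h2B : ‖(2 : ℝ) • B‖ = 2 * ‖B‖ := by
      rw [norm_smul (2:ℝ) B]; simp
    rw [h2B] at key
    linarith
  · have e1 : (1 + α) • B - (2 * α) • A = (1 + α) • (B - A) + (1 - α) • A := by module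
    have e2 : (1 - α) • B + (2 * α) • A = (1 - α) • (B - A) + (1 + α) • A := by module
    have n1 : ‖(1 + α) • B - (2 * α) • A‖ ≤ (1 + α) * ‖B - A‖ + (1 - α) * ‖A‖ := by
      rw [e1]
      calc ‖(1 + α) • (B - A) + (1 - α) • A‖ ≤ ‖(1 + α) • (B - A)‖ + ‖(1 - α) • A‖ :=
            norm_add_le _ _
        _ = (1 + α) * ‖B - A‖ + (1 - α) * ‖A‖ := by
            rw [norm_smul ((1:ℝ)+α) (B-A), norm_smul ((1:ℝ)-α) A, Real.norm_eq_abs,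
              Real.norm_eq_abs, abs_of_nonneg (by linarith), abs_of_nonneg (by linarith)]
    have n2 : ‖(1 - α) • B + (2 * α) • A‖ ≤ (1 - α) * ‖B - A‖ + (1 + α) * ‖A‖ := by
      rw [e2]
      calc ‖(1 - α) • (B - A) + (1 + α) • A‖ ≤ ‖(1 - α) • (B - A)‖ + ‖(1 + α) • A‖ :=
            norm_add_le _ _
        _ = (1 - α) * ‖B - A‖ + (1 + α) * ‖A‖ := by
            rw [norm_smul ((1:ℝ)-α) (B-A), norm_smul ((1:ℝ)+α) A, Real.norm_eq_abs,
              Real.norm_eq_abs, abs_of_nonneg (by linarith), abs_of_nonneg (by linarith)]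
    have hAB : ‖B - A‖ = ‖A - B‖ := by rw [norm_sub_rev]
    linarith
end
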